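/- If σ verifies the optimality condition, then for every y ∈ [0,1] the fiber f_σ^{-1}(y) is uncountable. -/

import Mathlib

/-- Apply a `k`-block substitution blockwise to a finite word, dropping the
trailing partial block (the paper's truncation convention). -/
def blockApply (k : Nat) (sigma : List Bool -> List Bool) (w : List Bool) : List Bool :=
  if h : 0 < k && k <= w.length then
    sigma (w.take k) ++ blockApply k sigma (w.drop k)
  else []
termination_by w.length
decreasing_by
  simp only [Bool.and_eq_true, decide_eq_true_eq] at h
  simp [List.length_drop]
  omega

/-- The length-`m` prefix of an infinite binary word. -/
def prefixOf (u : Nat -> Bool) (m : Nat) : List Bool := List.ofFn fun i : Fin m => u i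

/-- Concatenation of the first `m` words of a sequence of finite words. -/
def concatPre (v : Nat -> List Bool) (m : Nat) : List Bool :=
  (List.ofFn fun i : Fin m => v i).flatten

/-- The optimality condition: every infinite binary word is an infinite
concatenation of nonempty images of length-`k` blocks under `sigma`. -/
def OC (k : Nat) (sigma : List Bool -> List Bool) : Prop :=
  ∀ w : Nat -> Bool, ∃ u : Nat -> List Bool,
    (∀ i, (u i).length = k ∧ sigma (u i) ≠ []) ∧
    ∀ m, concatPre (fun i => sigma (u i)) m
        = prefixOf w (concatPre (fun i => sigma (u i)) m).length

/-- Value of a finite binary word read as binary digits after the point. -/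
noncomputable def valFin (w : List Bool) : ℝ :=
  ((w.zipIdx.map Prod.swap).map fun p => if p.2 then ((2:ℝ))⁻¹ ^ (p.1 + 1) else 0).sum

/-- Value of an infinite binary word read as binary digits after the point. -/
noncomputable def valInf (u : Nat -> Bool) : ℝ :=
  ∑' i : Nat, if u i then ((2:ℝ))⁻¹ ^ (i + 1) else 0

/-- A word is not eventually zero (it has infinitely many ones). -/
def NEZ (u : Nat -> Bool) : Prop := ∀ n, ∃ m, n ≤ m ∧ u m = true

open Classical in
/-- The unique binary expansion of `x ∈ (0,1]` not ending in `0^∞`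
(junk value, the zero word, if no such expansion exists). -/
noncomputable def tilde (x : ℝ) : Nat -> Bool :=
  if h : ∃ u : Nat -> Bool, NEZ u ∧ valInf u = x then h.choose else fun _ => false

open Classical in
/-- The interval map induced by the erasing `k`-block substitution `sigma`
(with erased block `weps`) acting on binary expansions: `f x = 0.sigma(x̃)`,
with value `0` at `x = 0` (no expansion not ending in `0^∞`) and when
`x̃ = weps^∞`. -/
noncomputable def fSigma (k : Nat) (sigma : List Bool -> List Bool) (weps : List Bool)
    (x : ℝ) : ℝ :=
  if (¬ ∃ u : Nat -> Bool, NEZ u ∧ valInf u = x) ∨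
     (∀ i : Nat, tilde x i = weps.getD (i % k) false) then 0
  else ⨆ n : Nat, valFin (blockApply k sigma (prefixOf (tilde x) (n * k)))

/-!
Write `y = 0.w` in binary. By the optimality condition `w = σ(u₀) σ(u₁) ⋯` with `σ(uᵢ) ≠ []`,
so `uᵢ ≠ w_ε`. For each `ε : ℕ → Bool`, insert one block `w_ε` before or after each `uᵢ`
according to `εᵢ`. Since `σ(w_ε) = []`, the resulting word is still mapped onto `w`; it has
infinitely many ones and is not `w_ε^∞`, so its value lies in the fiber of `y`. Distinct `ε`
give distinct words, hence the fiber contains a copy of `{0,1}^ℕ`.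
-/

open Filter Topology

def bitDigits (u : ℕ → Bool) : ℕ → Fin 2 := fun i => if u i then 1 else 0

lemma ofDigitsTerm_bitDigits (u : ℕ → Bool) (i : ℕ) :
    Real.ofDigitsTerm (bitDigits u) i = if u i then ((2 : ℝ) ^ (i + 1))⁻¹ else 0 := by
  cases h : u i <;> simp [Real.ofDigitsTerm, bitDigits, h]

lemma valInf_eq_ofDigits (u : ℕ → Bool) : valInf u = Real.ofDigits (bitDigits u) :=
  tsum_congr fun i => by simp [ofDigitsTerm_bitDigits]

lemma valInf_mem_Icc (u : ℕ → Bool) : valInf u ∈ Set.Icc (0 : ℝ) 1 := by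
  rw [valInf_eq_ofDigits]
  exact ⟨Real.ofDigits_nonneg _, Real.ofDigits_le_one _⟩

lemma valFin_append_singleton (l : List Bool) (a : Bool) :
    valFin (l ++ [a]) = valFin l + if a then (2⁻¹ : ℝ) ^ (l.length + 1) else 0 := by
  simp [valFin, List.zipIdx_append]

lemma prefixOf_succ (u : ℕ → Bool) (m : ℕ) : prefixOf u (m + 1) = prefixOf u m ++ [u m] := by
  rw [prefixOf, List.ofFn_succ']
  simp [prefixOf, List.concat_eq_append]

lemma length_prefixOf (u : ℕ → Bool) (m : ℕ) : (prefixOf u m).length = m := by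
  simp [prefixOf]

lemma valFin_prefixOf (u : ℕ → Bool) (m : ℕ) :
    valFin (prefixOf u m) = ∑ i ∈ Finset.range m, Real.ofDigitsTerm (bitDigits u) i := by
  induction m with
  | zero => rfl
  | succ m ih =>
    rw [prefixOf_succ, valFin_append_singleton, ih, Finset.sum_range_succ, length_prefixOf,
      ofDigitsTerm_bitDigits, inv_pow]

lemma valFin_prefixOf_le_valInf (u : ℕ → Bool) (m : ℕ) : valFin (prefixOf u m) ≤ valInf u := by
  rw [valFin_prefixOf, valInf_eq_ofDigits]
  exact Real.summable_ofDigitsTerm.sum_le_tsum _ fun _ _ => Real.ofDigitsTerm_nonneg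

lemma iSup_valFin_prefixOf {L : ℕ → ℕ} (hL : Tendsto L atTop atTop) (u : ℕ → Bool) :
    ⨆ n, valFin (prefixOf u (L n)) = valInf u := by
  have hlim : Tendsto (fun n => valFin (prefixOf u (L n))) atTop (𝓝 (valInf u)) := by
    simp only [valFin_prefixOf, valInf_eq_ofDigits]
    exact Real.summable_ofDigitsTerm.hasSum.tendsto_sum_nat.comp hL
  have hbdd : BddAbove (Set.range fun n => valFin (prefixOf u (L n))) :=
    ⟨valInf u, Set.forall_mem_range.2 fun n => valFin_prefixOf_le_valInf u (L n)⟩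
  exact le_antisymm (ciSup_le fun n => valFin_prefixOf_le_valInf u (L n))
    (le_of_tendsto' hlim fun n => le_ciSup hbdd n)

lemma exists_valInf_eq {y : ℝ} (hy : y ∈ Set.Icc (0 : ℝ) 1) : ∃ u, valInf u = y := by
  obtain ⟨d, -, rfl⟩ := Real.ofDigits_SurjOn one_lt_two hy
  refine ⟨fun i => d i = 1, ?_⟩
  rw [valInf_eq_ofDigits]
  congr 1
  funext i
  by_cases h : d i = 1 <;> simp [bitDigits, h]
  omega

lemma Real.ofDigits_pos {b : ℕ} {d : ℕ → Fin b} {m : ℕ} (hm : (d m : ℕ) ≠ 0) :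
    0 < Real.ofDigits d := by
  have hb : (0 : ℝ) < b := by exact_mod_cast Fin.pos (d m)
  have hterm : 0 < Real.ofDigitsTerm d m :=
    mul_pos (by exact_mod_cast Nat.pos_of_ne_zero hm) (by positivity)
  exact hterm.trans_le
    (Real.summable_ofDigitsTerm.le_tsum m fun _ _ => Real.ofDigitsTerm_nonneg)

/-- Lexicographic comparison: past the first digit `n` where they differ, the tail of `u` is
worth at most `2⁻¹ ^ (n + 1)` while the tail of `v` is worth strictly more than `0`. -/
lemma valInf_lt_valInf_of_lt {u v : ℕ → Bool} (hv : NEZ v) {n : ℕ} (hpre : ∀ i < n, u i = v i)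
    (hun : u n = false) (hvn : v n = true) : valInf u < valInf v := by
  obtain ⟨m, hm, hvm⟩ := hv (n + 1)
  have hsum : ∀ w : ℕ → Bool, (∀ i < n, w i = v i) →
      ∑ i ∈ Finset.range (n + 1), Real.ofDigitsTerm (bitDigits w) i
        = ∑ i ∈ Finset.range n, Real.ofDigitsTerm (bitDigits v) i
          + Real.ofDigitsTerm (bitDigits w) n := fun w hw => by
    rw [Finset.sum_range_succ]
    congr 1
    exact Finset.sum_congr rfl fun i hi => by
      rw [ofDigitsTerm_bitDigits, ofDigitsTerm_bitDigits, hw i (Finset.mem_range.1 hi)]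
  rw [valInf_eq_ofDigits, valInf_eq_ofDigits, Real.ofDigits_eq_sum_add_ofDigits _ (n + 1),
    Real.ofDigits_eq_sum_add_ofDigits (bitDigits v) (n + 1), hsum u hpre, hsum v fun _ _ => rfl,
    ofDigitsTerm_bitDigits, ofDigitsTerm_bitDigits, hun, hvn, if_neg Bool.false_ne_true, if_pos rfl]
  set c : ℝ := ((2 : ℝ) ^ (n + 1))⁻¹
  have hc : 0 < c := by positivity
  have htail_u := mul_le_mul_of_nonneg_left
    (Real.ofDigits_le_one fun i => bitDigits u (i + (n + 1))) hc.le
  have htail_v := mul_pos hc (Real.ofDigits_pos (d := fun i => bitDigits v (i + (n + 1)))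
    (m := m - (n + 1)) (by simp [bitDigits, Nat.sub_add_cancel hm, hvm]))
  push_cast at htail_u htail_v ⊢
  linarith

lemma valInf_injOn : Set.InjOn valInf {u | NEZ u} := by
  intro u hu v hv huv
  by_contra hne
  have hex : ∃ n, u n ≠ v n := Function.ne_iff.1 hne
  classical
  have hpre : ∀ i < Nat.find hex, u i = v i := fun i hi => not_not.1 (Nat.find_min hex hi)
  have hdiff := Nat.find_spec hex
  cases hun : u (Nat.find hex) <;> rw [hun] at hdiff
  · exact (valInf_lt_valInf_of_lt hv hpre hun (by simpa using hdiff.symm)).ne huv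
  · exact (valInf_lt_valInf_of_lt hu (fun i hi => (hpre i hi).symm)
      (by simpa using hdiff.symm) hun).ne' huv

lemma tilde_valInf {u : ℕ → Bool} (hu : NEZ u) : tilde (valInf u) = u := by
  have hex : ∃ w : ℕ → Bool, NEZ w ∧ valInf w = valInf u := ⟨u, hu, rfl⟩
  rw [tilde, dif_pos hex]
  exact valInf_injOn hex.choose_spec.1 hu hex.choose_spec.2

lemma eq_prefixOf_length_of_prefix {l : List Bool} {u : ℕ → Bool} {m : ℕ}
    (h : l <+: prefixOf u m) : l = prefixOf u l.length := by
  apply List.ext_getElem (length_prefixOf u _).symm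
  intro i hi _
  rw [h.getElem hi]
  simp [prefixOf]

lemma concatPre_succ (v : ℕ → List Bool) (m : ℕ) : concatPre v (m + 1) = concatPre v m ++ v m := by
  rw [concatPre, List.ofFn_succ']
  simp [concatPre]

lemma concatPre_prefix_of_le (v : ℕ → List Bool) {m n : ℕ} (h : m ≤ n) :
    concatPre v m <+: concatPre v n := by
  induction n, h using Nat.le_induction with
  | base => exact List.prefix_refl _
  | succ n _ ih => exact ih.trans (concatPre_succ v n ▸ List.prefix_append _ _)

lemma le_length_concatPre {v : ℕ → List Bool} (hv : ∀ i, v i ≠ []) (n : ℕ) :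
    n ≤ (concatPre v n).length := by
  induction n with
  | zero => simp
  | succ n ih =>
    rw [concatPre_succ, List.length_append]
    have hpos := List.length_pos_iff.2 (hv n)
    omega

lemma concatPre_two_mul (v : ℕ → List Bool) (n : ℕ) :
    concatPre v (2 * n) = concatPre (fun i => v (2 * i) ++ v (2 * i + 1)) n := by
  induction n with
  | zero => rfl
  | succ n ih => rw [Nat.mul_succ, concatPre_succ, concatPre_succ, ih, concatPre_succ,
      List.append_assoc]

section Blocks

variable {k : ℕ}

def blocksWord (k : ℕ) (b : ℕ → List Bool) (m : ℕ) : Bool := (b (m / k)).getD (m % k) false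

lemma blocksWord_mul_add (b : ℕ → List Bool) (n : ℕ) {t : ℕ} (ht : t < k) :
    blocksWord k b (n * k + t) = (b n).getD t false := by
  have hdiv : (n * k + t) / k = n := by
    rw [add_comm, Nat.add_mul_div_right _ _ (by omega), Nat.div_eq_of_lt ht, zero_add]
  simp [blocksWord, hdiv, Nat.mod_eq_of_lt ht]

lemma ofFn_blocksWord {b : ℕ → List Bool} {n : ℕ} (hb : (b n).length = k) :
    List.ofFn (fun t : Fin k => blocksWord k b (n * k + t)) = b n := by
  apply List.ext_getElem (by simp [hb])
  intro t ht _
  simp only [List.getElem_ofFn]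
  rw [blocksWord_mul_add b n (by simpa using ht), List.getD_eq_getElem]

lemma prefixOf_blocksWord {b : ℕ → List Bool} (hb : ∀ i, (b i).length = k) (n : ℕ) :
    prefixOf (blocksWord k b) (n * k) = concatPre b n := by
  induction n with
  | zero => simp [prefixOf, concatPre]
  | succ n ih =>
    rw [concatPre_succ, ← ih, ← ofFn_blocksWord (hb n), Nat.succ_mul, prefixOf, List.ofFn_add]
    rfl

lemma blocksWord_injOn : Set.InjOn (blocksWord k) {b | ∀ i, (b i).length = k} := by
  intro b hb b' hb' h
  funext n
  rw [← ofFn_blocksWord (hb n), ← ofFn_blocksWord (hb' n), h]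

lemma NEZ_blocksWord {b : ℕ → List Bool} (hb : ∀ i, (b i).length = k)
    (htrue : ∀ n, ∃ j ≥ n, true ∈ b j) : NEZ (blocksWord k b) := by
  intro n
  obtain ⟨j, hj, hmem⟩ := htrue n
  obtain ⟨t, ht, hbt⟩ := List.getElem_of_mem hmem
  rw [hb j] at ht
  have hjk : j ≤ j * k + t := Nat.le_add_right_of_le (Nat.le_mul_of_pos_right j (by omega))
  refine ⟨j * k + t, hj.trans hjk, ?_⟩
  rw [blocksWord_mul_add b j ht, List.getD_eq_getElem _ _ (by rwa [hb j]), hbt]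

end Blocks

section BlockApply

variable {k : ℕ} (sigma : List Bool → List Bool)

lemma blockApply_nil : blockApply k sigma [] = [] := by
  rw [blockApply, dif_neg (by simp; omega)]

lemma blockApply_append {v : List Bool} (hk : 0 < k) (hv : v.length = k) (w : List Bool) :
    blockApply k sigma (v ++ w) = sigma v ++ blockApply k sigma w := by
  rw [blockApply, dif_pos (by simp [hk, hv]), List.take_left' hv, List.drop_left' hv]

lemma blockApply_flatten {l : List (List Bool)} (hk : 0 < k) (hl : ∀ v ∈ l, v.length = k) :
    blockApply k sigma l.flatten = (l.map sigma).flatten := by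
  induction l with
  | nil => exact blockApply_nil sigma
  | cons v l ih =>
    rw [List.flatten_cons, blockApply_append sigma hk (hl v List.mem_cons_self),
      ih fun w hw => hl w (List.mem_cons_of_mem v hw), List.map_cons, List.flatten_cons]

lemma blockApply_concatPre {b : ℕ → List Bool} (hk : 0 < k) (hb : ∀ i, (b i).length = k)
    (n : ℕ) : blockApply k sigma (concatPre b n) = concatPre (fun i => sigma (b i)) n := by
  rw [concatPre, blockApply_flatten sigma hk (by simp [List.mem_ofFn, hb]), List.map_ofFn]
  rfl

end BlockApply

lemma true_mem_or_true_mem_of_ne {a b : List Bool} (hab : a ≠ b) (hlen : a.length = b.length) :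
    true ∈ a ∨ true ∈ b := by
  by_contra! h
  have hfalse : ∀ l : List Bool, true ∉ l → l = List.replicate l.length false :=
    fun l hl => List.eq_replicate_iff.2 ⟨rfl, fun c hc => by cases c <;> simp_all⟩
  exact hab (by rw [hfalse a h.1, hfalse b h.2, hlen])

section Padding

variable (weps : List Bool) (u : ℕ → List Bool)

/-- Blocks `2 i` and `2 i + 1` are `weps, u i` if `eps i`, and `u i, weps` otherwise. -/
def padBlocks (eps : ℕ → Bool) (j : ℕ) : List Bool :=
  if (j % 2 = 0 ↔ eps (j / 2)) then weps else u (j / 2)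

variable {weps u}

lemma padBlocks_two_mul (eps : ℕ → Bool) (i : ℕ) :
    padBlocks weps u eps (2 * i) = if eps i then weps else u i := by
  simp [padBlocks]

lemma padBlocks_two_mul_add_one (eps : ℕ → Bool) (i : ℕ) :
    padBlocks weps u eps (2 * i + 1) = if eps i then u i else weps := by
  cases h : eps i <;> simp [padBlocks, Nat.add_mod, Nat.add_div, h]

lemma padBlocks_injective (huw : ∀ i, u i ≠ weps) : Function.Injective (padBlocks weps u) := by
  intro e e' h
  funext i
  have hi := congrFun h (2 * i)
  rw [padBlocks_two_mul, padBlocks_two_mul] at hi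
  cases he : e i <;> cases he' : e' i <;> simp only [he, he'] at hi ⊢
  exacts [(huw i hi).elim, (huw i hi.symm).elim]

variable {k : ℕ}

lemma length_padBlocks (hlen : weps.length = k) (hu : ∀ i, (u i).length = k) (eps : ℕ → Bool)
    (j : ℕ) : (padBlocks weps u eps j).length = k := by
  unfold padBlocks
  split_ifs <;> simp [hlen, hu]

lemma NEZ_blocksWord_padBlocks (hlen : weps.length = k) (hu : ∀ i, (u i).length = k)
    (huw : ∀ i, u i ≠ weps) (eps : ℕ → Bool) : NEZ (blocksWord k (padBlocks weps u eps)) := by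
  refine NEZ_blocksWord (length_padBlocks hlen hu eps) fun n => ?_
  rcases true_mem_or_true_mem_of_ne (huw n) ((hu n).trans hlen.symm) with h | h <;>
    cases he : eps n
  exacts [⟨2 * n, by omega, by simpa [padBlocks_two_mul, he]⟩,
    ⟨2 * n + 1, by omega, by simpa [padBlocks_two_mul_add_one, he]⟩,
    ⟨2 * n + 1, by omega, by simpa [padBlocks_two_mul_add_one, he]⟩,
    ⟨2 * n, by omega, by simpa [padBlocks_two_mul, he]⟩]

lemma blocksWord_padBlocks_ne_const (hlen : weps.length = k) (hu : ∀ i, (u i).length = k)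
    (huw : ∀ i, u i ≠ weps) (eps : ℕ → Bool) :
    blocksWord k (padBlocks weps u eps) ≠ blocksWord k fun _ => weps := by
  intro h
  have hconst := blocksWord_injOn (length_padBlocks hlen hu eps) (fun _ => hlen) h
  have h0 := congrFun hconst (2 * 0)
  have h1 := congrFun hconst (2 * 0 + 1)
  rw [padBlocks_two_mul] at h0
  rw [padBlocks_two_mul_add_one] at h1
  cases he : eps 0 <;> simp only [he] at h0 h1
  exacts [huw 0 h0, huw 0 h1]

lemma valInf_blocksWord_padBlocks_injective (hlen : weps.length = k)
    (hu : ∀ i, (u i).length = k) (huw : ∀ i, u i ≠ weps) :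
    Function.Injective fun eps => valInf (blocksWord k (padBlocks weps u eps)) := fun e e' h =>
  padBlocks_injective huw <|
    blocksWord_injOn (length_padBlocks hlen hu e) (length_padBlocks hlen hu e') <|
      valInf_injOn (NEZ_blocksWord_padBlocks hlen hu huw e)
        (NEZ_blocksWord_padBlocks hlen hu huw e') h

end Padding

lemma concatPre_sigma_padBlocks {sigma : List Bool → List Bool} {weps : List Bool}
    (hσ : sigma weps = []) (u : ℕ → List Bool) (eps : ℕ → Bool) (n : ℕ) :
    concatPre (fun j => sigma (padBlocks weps u eps j)) (2 * n)
      = concatPre (fun i => sigma (u i)) n := by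
  rw [concatPre_two_mul]
  congr
  funext i
  rw [padBlocks_two_mul, padBlocks_two_mul_add_one]
  cases eps i <;> simp [hσ]

theorem fSigma_valInf_blocksWord_padBlocks {k : ℕ} {sigma : List Bool → List Bool}
    {weps : List Bool} {u : ℕ → List Bool} {w : ℕ → Bool} (hlen : weps.length = k)
    (hσ : sigma weps = []) (hu : ∀ i, (u i).length = k) (hσu : ∀ i, sigma (u i) ≠ [])
    (hw : ∀ m, concatPre (fun i => sigma (u i)) m
      = prefixOf w (concatPre (fun i => sigma (u i)) m).length) (eps : ℕ → Bool) :
    fSigma k sigma weps (valInf (blocksWord k (padBlocks weps u eps))) = valInf w := by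
  have huw : ∀ i, u i ≠ weps := fun i h => hσu i (h ▸ hσ)
  have hk : 0 < k := by
    rcases true_mem_or_true_mem_of_ne (huw 0) ((hu 0).trans hlen.symm) with h | h
    exacts [hu 0 ▸ List.length_pos_of_mem h, hlen ▸ List.length_pos_of_mem h]
  have hb := length_padBlocks hlen hu eps
  have hNEZ := NEZ_blocksWord_padBlocks hlen hu huw eps
  set image : ℕ → List Bool := concatPre fun j => sigma (padBlocks weps u eps j)
  -- the image of the first `n` blocks is a prefix of that of the first `2 n`, a prefix of `w`
  have himage : ∀ n, image n = prefixOf w (image n).length := by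
    intro n
    have h := concatPre_prefix_of_le (fun j => sigma (padBlocks weps u eps j))
      (Nat.le_mul_of_pos_left n two_pos)
    rw [concatPre_sigma_padBlocks hσ, hw n] at h
    exact eq_prefixOf_length_of_prefix h
  have hlength : Tendsto (fun n => (image n).length) atTop atTop := by
    refine tendsto_atTop_atTop_of_monotone
      (fun m n h => (concatPre_prefix_of_le _ h).length_le) fun m => ⟨2 * m, ?_⟩
    simpa [image, concatPre_sigma_padBlocks hσ] using le_length_concatPre hσu m
  rw [fSigma, if_neg, tilde_valInf hNEZ]
  · simp_rw [prefixOf_blocksWord hb, blockApply_concatPre sigma hk hb]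
    rw [← iSup_valFin_prefixOf hlength w]
    exact iSup_congr fun n => congrArg valFin (himage n)
  · rw [tilde_valInf hNEZ, not_or, not_not]
    exact ⟨⟨_, hNEZ, rfl⟩, fun h => blocksWord_padBlocks_ne_const hlen hu huw eps (funext h)⟩

instance : Uncountable (ℕ → Bool) := by
  rw [← Cardinal.aleph0_lt_mk_iff]
  simpa using Cardinal.aleph0_lt_continuum

theorem fSigma_all_fibers_uncountable_general
    (k : Nat) (sigma : List Bool -> List Bool) (weps : List Bool)
    (hlen : weps.length = k)
    (herase : ∀ w : List Bool, w.length = k → (sigma w = [] ↔ w = weps))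
    (hOC : OC k sigma) :
    ∀ y ∈ Set.Icc (0:ℝ) 1,
      ¬ (Set.Icc (0:ℝ) 1 ∩ fSigma k sigma weps ⁻¹' {y}).Countable := by
  intro y hy hcount
  obtain ⟨w, rfl⟩ := exists_valInf_eq hy
  obtain ⟨u, hu, hw⟩ := hOC w
  have hσ : sigma weps = [] := (herase weps hlen).2 rfl
  have hulen : ∀ i, (u i).length = k := fun i => (hu i).1
  have huw : ∀ i, u i ≠ weps := fun i h => (hu i).2 (h ▸ hσ)
  have hfiber : ∀ eps, valInf (blocksWord k (padBlocks weps u eps))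
      ∈ Set.Icc (0 : ℝ) 1 ∩ fSigma k sigma weps ⁻¹' {valInf w} := fun eps =>
    ⟨valInf_mem_Icc _, fSigma_valInf_blocksWord_padBlocks hlen hσ hulen (fun i => (hu i).2) hw eps⟩
  have hcount' := hcount.preimage (valInf_blocksWord_padBlocks_injective hlen hulen huw)
  rw [Set.preimage_eq_univ_iff.2 (Set.range_subset_iff.2 hfiber), Set.countable_univ_iff] at hcount'
  exact not_countable hcount'

/-- under the optimality condition every fiber of `fSigma` over
`[0,1]` is uncountable. -/
theorem fSigma_all_fibers_uncountable
    (k : Nat) (sigma : List Bool -> List Bool) (weps : List Bool)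
    (hk : 2 ≤ k) (hlen : weps.length = k)
    (hne1 : weps ≠ List.replicate k true)
    (herase : ∀ w : List Bool, w.length = k → (sigma w = [] ↔ w = weps))
    (hOC : OC k sigma) :
    ∀ y ∈ Set.Icc (0:ℝ) 1,
      ¬ (Set.Icc (0:ℝ) 1 ∩ fSigma k sigma weps ⁻¹' {y}).Countable :=
  fSigma_all_fibers_uncountable_general k sigma weps hlen herase hOC
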